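/- For every ε > 0 and every integer k ≥ 1 there exists δ > 0 such that for all sufficiently large N the following holds: for every ε-dense subset J ⊆ {0,1,…,N−1} there exist positive integers c_1,…,c_k and a δ-dense subset J′ ⊆ {0,1,…,N−1} such that for every c ∈ J′, the k-cube based at c with sides c_1,…,c_k is contained in J. -/
import Mathlib


/-- The `k`-cube based at `c` with sides `cs i`, as a finite subset of `ℕ`:
`{c + ∑_{i ∈ S} cs i : S ⊆ {1,…,k}}`. -/
def cubeOn (c : ℕ) {k : ℕ} (cs : Fin k → ℕ) : Finset ℕ :=
  Finset.image (fun S : Finset (Fin k) => c + ∑ i ∈ S, cs i) Finset.univ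

lemma mem_cubeOn {c x : ℕ} {k : ℕ} {cs : Fin k → ℕ} :
    x ∈ cubeOn c cs ↔ ∃ S : Finset (Fin k), c + ∑ i ∈ S, cs i = x := by
  simp [cubeOn]

lemma erase_zero_eq {k : ℕ} (S : Finset (Fin (k + 1))) :
    S.erase 0 = (Finset.univ.filter (fun j : Fin k => j.succ ∈ S)).image Fin.succ := by
  ext i
  induction i using Fin.cases with
  | zero => simp [Fin.succ_ne_zero]
  | succ j =>
      simp only [Finset.mem_erase, Finset.mem_image, Finset.mem_filter, Finset.mem_univ,
        true_and]
      constructor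
      · rintro ⟨-, hj⟩
        exact ⟨j, hj, rfl⟩
      · rintro ⟨j', hj', h⟩
        exact ⟨Fin.succ_ne_zero j, (Fin.succ_injective _ h) ▸ hj'⟩

lemma sum_cons_decomp {k : ℕ} (d : ℕ) (cs : Fin k → ℕ) (S : Finset (Fin (k + 1))) :
    ∃ T : Finset (Fin k),
      ∑ i ∈ S, Fin.cons d cs i = (if (0 : Fin (k+1)) ∈ S then d else 0) + ∑ j ∈ T, cs j := by
  refine ⟨Finset.univ.filter (fun j : Fin k => j.succ ∈ S), ?_⟩
  have herase : ∑ i ∈ S.erase 0, Fin.cons d cs i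
      = ∑ j ∈ Finset.univ.filter (fun j : Fin k => j.succ ∈ S), cs j := by
    rw [erase_zero_eq, Finset.sum_image (fun a _ b _ h => Fin.succ_injective _ h)]
    simp
  by_cases h0 : (0 : Fin (k+1)) ∈ S
  · rw [if_pos h0, ← herase, ← Finset.add_sum_erase _ _ h0]
    simp
  · rw [if_neg h0, Finset.erase_eq_of_notMem h0] at *
    rw [herase, zero_add]

lemma cubeOn_cons_subset {c d : ℕ} {k : ℕ} {cs : Fin k → ℕ} {J : Finset ℕ}
    (h : ∀ x ∈ cubeOn c cs, x ∈ J ∧ x + d ∈ J) :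
    cubeOn c (Fin.cons d cs) ⊆ J := by
  intro x hx
  obtain ⟨S, hS⟩ := mem_cubeOn.mp hx
  obtain ⟨T, hT⟩ := sum_cons_decomp d cs S
  have hmem : c + ∑ j ∈ T, cs j ∈ cubeOn c cs := mem_cubeOn.mpr ⟨T, rfl⟩
  obtain ⟨h1, h2⟩ := h _ hmem
  by_cases h0 : (0 : Fin (k+1)) ∈ S
  · rw [if_pos h0] at hT
    have : x = c + ∑ j ∈ T, cs j + d := by omega
    rwa [this]
  · rw [if_neg h0] at hT
    have : x = c + ∑ j ∈ T, cs j := by omega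
    rwa [this]

/-- One step: from an `ε`-dense set extract a difference `d ≥ 1` such that the set of `c`
with `c, c + d ∈ J` is `ε²/8`-dense. -/
lemma step (ε : ℝ) (hε : 0 < ε) :
    ∃ δ : ℝ, 0 < δ ∧ ∃ N₀ : ℕ, ∀ N : ℕ, N₀ ≤ N →
      ∀ J : Finset ℕ, J ⊆ Finset.range N → ε * N ≤ (J.card : ℝ) →
        ∃ d : ℕ, 1 ≤ d ∧
          δ * N ≤ (((Finset.range N).filter (fun c => c ∈ J ∧ c + d ∈ J)).card : ℝ) := by
  refine ⟨ε ^ 2 / 8, by positivity, ⌈8 * (1 + ε) / ε ^ 2⌉₊ + 2, ?_⟩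
  intro N hN J hJ hcard
  have hNR : 8 * (1 + ε) / ε ^ 2 ≤ (N : ℝ) := by
    calc 8 * (1 + ε) / ε ^ 2 ≤ (⌈8 * (1 + ε) / ε ^ 2⌉₊ : ℝ) := Nat.le_ceil _
    _ ≤ (N : ℝ) := by exact_mod_cast le_trans (Nat.le_add_right _ 2) hN
  have hN2 : 2 ≤ N := le_trans (Nat.le_add_left 2 _) hN
  have hε2N : 8 * (1 + ε) ≤ ε ^ 2 * N := by
    rw [div_le_iff₀ (by positivity)] at hNR; linarith [hNR]
  have hεN1 : 1 ≤ ε * N := by nlinarith [sq_nonneg ε, sq_nonneg (ε - 1)]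
  have hJ1 : 1 ≤ (J.card : ℝ) := le_trans hεN1 hcard
  have hJcard1 : 1 ≤ J.card := by exact_mod_cast hJ1
  set n : ℕ := ⌈ε ^ 2 * N / 4⌉₊ with hn_def
  have hnle : (n : ℝ) < ε ^ 2 * N / 4 + 1 := Nat.ceil_lt_add_one (by positivity)
  have hnge : ε ^ 2 * N / 4 ≤ (n : ℝ) := Nat.le_ceil _
  -- pigeonhole setup
  set f : ℕ × ℕ → ℕ := fun p => (p.1 - p.2) + (p.2 - p.1) with hf
  have hmaps : ∀ p ∈ J.offDiag, f p ∈ Finset.Ico 1 N := by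
    rintro ⟨a, b⟩ hp
    simp only [Finset.mem_offDiag] at hp
    obtain ⟨ha, hb, hne⟩ := hp
    have ha' := Finset.mem_range.mp (hJ ha)
    have hb' := Finset.mem_range.mp (hJ hb)
    simp only [Finset.mem_Ico, hf]
    omega
  have hmul : (Finset.Ico 1 N).card * n ≤ J.offDiag.card := by
    rw [Nat.card_Ico, Finset.offDiag_card]
    have hcast : ((J.card * J.card - J.card : ℕ) : ℝ) = (J.card : ℝ) ^ 2 - J.card := by
      have : J.card ≤ J.card * J.card := Nat.le_mul_of_pos_left _ (by omega)
      push_cast [Nat.cast_sub this]; ring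
    have hNm1 : ((N - 1 : ℕ) : ℝ) = (N : ℝ) - 1 := by
      push_cast [Nat.cast_sub (by omega : 1 ≤ N)]; ring
    rw [← Nat.cast_le (α := ℝ)]
    push_cast [hNm1, hcast]
    have hNge1 : (1 : ℝ) ≤ N := by exact_mod_cast (by omega : 1 ≤ N)
    nlinarith [hcard, hnle, hJ1, sq_nonneg ((J.card : ℝ) - ε * N), hε2N, hεN1,
      mul_le_mul_of_nonneg_left hnle.le (by linarith : (0:ℝ) ≤ (N:ℝ) - 1)]
  obtain ⟨d, hd, hfib⟩ := Finset.exists_le_card_fiber_of_mul_le_card_of_maps_to hmaps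
    ⟨1, by simp [Finset.mem_Ico]; omega⟩ hmul
  simp only [Finset.mem_Ico] at hd
  refine ⟨d, hd.1, ?_⟩
  set A : Finset ℕ := (Finset.range N).filter (fun c => c ∈ J ∧ c + d ∈ J) with hA
  have hsub : (J.offDiag.filter (fun p => f p = d)) ⊆
      (A.image fun a => (a, a + d)) ∪ (A.image fun a => (a + d, a)) := by
    rintro ⟨a, b⟩ hp
    simp only [Finset.mem_filter, Finset.mem_offDiag] at hp
    obtain ⟨⟨ha, hb, hne⟩, hfp⟩ := hp
    have ha' := Finset.mem_range.mp (hJ ha)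
    have hb' := Finset.mem_range.mp (hJ hb)
    simp only [hf] at hfp
    rcases lt_or_gt_of_ne hne with h | h
    · have hba : b = a + d := by omega
      refine Finset.mem_union_left _ (Finset.mem_image.mpr ⟨a, ?_, by rw [← hba]⟩)
      simp only [hA, Finset.mem_filter, Finset.mem_range]
      exact ⟨ha', ha, hba ▸ hb⟩
    · have hab : a = b + d := by omega
      refine Finset.mem_union_right _ (Finset.mem_image.mpr ⟨b, ?_, by rw [← hab]⟩)
      simp only [hA, Finset.mem_filter, Finset.mem_range]
      exact ⟨hb', hb, hab ▸ ha⟩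
  have hfib2 : n ≤ 2 * A.card := by
    calc n ≤ (J.offDiag.filter (fun p => f p = d)).card := hfib
    _ ≤ ((A.image fun a => (a, a + d)) ∪ (A.image fun a => (a + d, a))).card :=
        Finset.card_le_card hsub
    _ ≤ (A.image fun a => (a, a + d)).card + (A.image fun a => (a + d, a)).card :=
        Finset.card_union_le _ _
    _ ≤ A.card + A.card := add_le_add (Finset.card_image_le) (Finset.card_image_le)
    _ = 2 * A.card := by ring
  have : (n : ℝ) ≤ 2 * A.card := by exact_mod_cast hfib2
  linarith

/-- The main induction. -/
lemma aux (k : ℕ) : ∀ ε : ℝ, 0 < ε →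
    ∃ δ : ℝ, 0 < δ ∧ ∃ N₀ : ℕ, ∀ N : ℕ, N₀ ≤ N →
      ∀ J : Finset ℕ, J ⊆ Finset.range N → ε * N ≤ (J.card : ℝ) →
        ∃ cs : Fin k → ℕ, (∀ i, 1 ≤ cs i) ∧
          ∃ J' : Finset ℕ, J' ⊆ Finset.range N ∧ δ * N ≤ (J'.card : ℝ) ∧
            ∀ c ∈ J', cubeOn c cs ⊆ J := by
  induction k with
  | zero =>
      intro ε hε
      refine ⟨ε, hε, 0, fun N _ J hJ hcard => ⟨Fin.elim0, fun i => i.elim0, J, hJ, hcard, ?_⟩⟩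
      intro c hc x hx
      obtain ⟨S, hS⟩ := mem_cubeOn.mp hx
      have : x = c := by
        rw [← hS, Finset.sum_of_isEmpty, add_zero]
      exact this ▸ hc
  | succ k ih =>
      intro ε hε
      obtain ⟨δ₁, hδ₁, N₁, hstep⟩ := step ε hε
      obtain ⟨δ₂, hδ₂, N₂, hih⟩ := ih δ₁ hδ₁
      refine ⟨δ₂, hδ₂, max N₁ N₂, fun N hN J hJ hcard => ?_⟩
      obtain ⟨d, hd, hI⟩ := hstep N (le_trans (le_max_left _ _) hN) J hJ hcard
      set I : Finset ℕ := (Finset.range N).filter (fun c => c ∈ J ∧ c + d ∈ J) with hI_def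
      obtain ⟨cs, hcs, J', hJ'sub, hJ'card, hcube⟩ :=
        hih N (le_trans (le_max_right _ _) hN) I (Finset.filter_subset _ _) hI
      refine ⟨Fin.cons d cs, ?_, J', hJ'sub, hJ'card, fun c hc => ?_⟩
      · intro i
        induction i using Fin.cases with
        | zero => simpa using hd
        | succ j => simpa using hcs j
      · refine cubeOn_cons_subset (fun x hx => ?_)
        have := hcube c hc hx
        simp only [hI_def, Finset.mem_filter] at this
        exact this.2

/-- **Lemma 5.7.** For every `ε > 0` and `k ≥ 1` there is `δ > 0` such that for all large
`N`: every `ε`-dense subset `J ⊆ {0,…,N-1}` contains, for some sides `c_1,…,c_k ≥ 1` and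
every base point `c` in some `δ`-dense subset `J' ⊆ {0,…,N-1}`, the `k`-cube based at `c`
with these sides. -/
theorem stmt2 (ε : ℝ) (hε : 0 < ε) (k : ℕ) (hk : 1 ≤ k) :
    ∃ δ : ℝ, 0 < δ ∧ ∃ N₀ : ℕ, ∀ N : ℕ, N₀ ≤ N →
      ∀ J : Finset ℕ, J ⊆ Finset.range N → ε * N ≤ (J.card : ℝ) →
        ∃ cs : Fin k → ℕ, (∀ i, 1 ≤ cs i) ∧
          ∃ J' : Finset ℕ, J' ⊆ Finset.range N ∧ δ * N ≤ (J'.card : ℝ) ∧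
            ∀ c ∈ J', cubeOn c cs ⊆ J := aux k ε hε
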